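/- Let χ be an even primitive Dirichlet character modulo q with q > 1, let c be a positive multiple of q, let d be an integer coprime to c, and let d̄ denote the multiplicative inverse of d modulo c. For Re(s) < 0, the meromorphic continuation of L(s, E_{χ,1}, d/c) satisfies the functional equation L(s, E_{χ,1}, d/c) = (2·conj(χ)(d)/c^{2s−1}) · [ Ĵ₀^+(2(1−s))·L(1−s, E_{χ,1}, −d̄/c) + Ĵ₀^−(2(1−s))·L(1−s, E_{χ,1}, d̄/c) ], where Ĵ₀^+(w) := (2π)^{−w}·Γ(w/2)²·cos(πw/2), Ĵ₀^−(w) := (2π)^{−w}·Γ(w/2)², and the two series on the right-hand side converge absolutely (since Re(1−s) > 1). -/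

import Mathlib

/-!
Split `a` and `b` into residue classes mod `c`: since `χ a` and `e(abd/c)` only depend on
`a, b mod c`, the series is the finite combination
`∑_{u,v mod c} χ(u) e(uvd/c) L(δ_u, s) L(δ_v, s)` of products of the residue-class
L-functions `L(δ_u, s) = ∑_{n ≡ u} n^{-s}` (`δ_u = Pi.single u 1`), which continue
meromorphically; by the identity theorem this combination is `f`. The Hurwitz functional equation writes `L(δ_u, 1 - w)` through
`∑_t e(∓ut/c) L(δ_t, w)`. Substituting it into both factors, the sum over `v` collapses by
orthogonality onto `u = ±b d̄`, and as `χ` is even the new kernel is `c χ(d̄)` times the kernel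
of the same shape at `-d̄` (weight `e^{πiw} + e^{-πiw} = 2 cos πw`) and at `d̄` (weight `2`).
-/

open Finset Complex Real Filter

/-- The coefficient `∑_{ab=m} χ a` of the Eisenstein newform `E_{χ,1}`. -/
noncomputable def eisCoef {q : ℕ} (χ : DirichletCharacter ℂ q) (m : ℕ) : ℂ :=
  ∑ ab ∈ m.divisorsAntidiagonal, χ (ab.1 : ZMod q)

/-- The Voronoĭ `L`-series `L(s, E_{χ,1}, x/c) = ∑_{m≥1} (∑_{ab=m} χ a) e(mx/c) m^{-s}`. -/
noncomputable def voronoiL {q : ℕ} (χ : DirichletCharacter ℂ q) (c : ℕ) (x : ℤ) (s : ℂ) : ℂ :=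
  ∑' m : ℕ,
    eisCoef χ m * Complex.exp (2 * π * I * ((m : ℂ) * (x : ℂ) / (c : ℂ))) * (m : ℂ) ^ (-s)

/-- `Ĵ₀^+(w) = (2π)^{-w} Γ(w/2)² cos(πw/2)`. -/
noncomputable def J0plus (w : ℂ) : ℂ :=
  (2 * (π : ℂ)) ^ (-w) * Complex.Gamma (w / 2) ^ 2 * Complex.cos ((π : ℂ) * w / 2)

/-- `Ĵ₀^−(w) = (2π)^{-w} Γ(w/2)²`. -/
noncomputable def J0minus (w : ℂ) : ℂ :=
  (2 * (π : ℂ)) ^ (-w) * Complex.Gamma (w / 2) ^ 2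

open ZMod LSeries LSeries.notation

namespace ZMod

variable {N : ℕ} [NeZero N]

lemma LFunction_eq_sum_mul_LFunction_single (Φ : ZMod N → ℂ) (s : ℂ) :
    LFunction Φ s = ∑ t, Φ t * LFunction (Pi.single t 1) s := by
  simp only [LFunction, Pi.single_apply, ite_mul, one_mul, zero_mul, Finset.sum_ite_eq',
    Finset.mem_univ, if_true, Finset.mul_sum]
  exact Finset.sum_congr rfl fun _ _ => by ring

lemma dft_single (u : ZMod N) :
    𝓕 (Pi.single u (1 : ℂ)) = fun k => stdAddChar (-(u * k)) := by
  ext k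
  simp [dft_apply, Pi.single_apply]

lemma LFunction_single_one_sub (u : ZMod N) {w : ℂ} (hw : ∀ n : ℕ, w ≠ -n) (hw1 : w ≠ 1) :
    LFunction (Pi.single u 1) (1 - w) = N ^ (w - 1) * (2 * π) ^ (-w) * Gamma w *
      ∑ t, (cexp (π * I * w / 2) * stdAddChar (-(u * t)) +
        cexp (-π * I * w / 2) * stdAddChar (u * t)) * LFunction (Pi.single t 1) w := by
  have hneg : (fun k => (Pi.single u 1 : ZMod N → ℂ) (-k)) = Pi.single (-u) 1 := by
    ext k
    simp [Pi.single_apply, neg_eq_iff_eq_neg]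
  rw [LFunction_one_sub _ hw (Or.inr hw1), hneg, dft_single, dft_single,
    LFunction_eq_sum_mul_LFunction_single, LFunction_eq_sum_mul_LFunction_single]
  simp only [neg_mul, neg_neg, Finset.mul_sum, ← Finset.sum_add_distrib]
  exact Finset.sum_congr rfl fun _ _ => by ring

noncomputable def divisorSum (K : ZMod N → ZMod N → ℂ) (m : ℕ) : ℂ :=
  ∑ p ∈ m.divisorsAntidiagonal, K p.1 p.2

noncomputable def doubleLFunction (K : ZMod N → ZMod N → ℂ) (s : ℂ) : ℂ :=
  ∑ u, ∑ v, K u v * (LFunction (Pi.single u 1) s * LFunction (Pi.single v 1) s)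

lemma divisorSum_eq_sum_smul_convolution (K : ZMod N → ZMod N → ℂ) :
    divisorSum K = ∑ u, ∑ v, K u v • ((fun n : ℕ => (Pi.single u 1 : ZMod N → ℂ) n) ⍟
      fun n : ℕ => (Pi.single v 1 : ZMod N → ℂ) n) := by
  ext m
  simp only [divisorSum, Finset.sum_apply, Pi.smul_apply, LSeries.convolution_def, smul_eq_mul,
    Finset.mul_sum]
  simp_rw [Finset.sum_comm (s := (Finset.univ : Finset (ZMod N))) (t := m.divisorsAntidiagonal)]
  simp [Pi.single_apply]

lemma LSeriesHasSum_divisorSum (K : ZMod N → ZMod N → ℂ) {s : ℂ} (hs : 1 < s.re) :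
    LSeriesHasSum (divisorSum K) s (doubleLFunction K s) := by
  have hL (u : ZMod N) : LSeriesHasSum (fun n : ℕ => (Pi.single u 1 : ZMod N → ℂ) n) s
      (LFunction (Pi.single u 1) s) := by
    rw [LFunction_eq_LSeries _ hs]
    exact (LSeriesSummable_of_one_lt_re _ hs).LSeriesHasSum
  rw [divisorSum_eq_sum_smul_convolution]
  exact .sum fun u _ => .sum fun v _ => ((hL u).convolution (hL v)).smul _

lemma differentiableAt_doubleLFunction (K : ZMod N → ZMod N → ℂ) {s : ℂ} (hs : s ≠ 1) :
    DifferentiableAt ℂ (doubleLFunction K) s :=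
  .fun_sum fun _ _ => .fun_sum fun _ _ => .const_mul
    ((differentiableAt_LFunction _ s (.inl hs)).mul (differentiableAt_LFunction _ s (.inl hs))) _

lemma doubleLFunction_add (K K' : ZMod N → ZMod N → ℂ) (s : ℂ) :
    doubleLFunction (K + K') s = doubleLFunction K s + doubleLFunction K' s := by
  simp only [doubleLFunction, Pi.add_apply, add_mul, Finset.sum_add_distrib]

lemma doubleLFunction_smul (a : ℂ) (K : ZMod N → ZMod N → ℂ) (s : ℂ) :
    doubleLFunction (a • K) s = a * doubleLFunction K s := by
  simp only [doubleLFunction, Pi.smul_apply, smul_eq_mul, mul_assoc, Finset.mul_sum]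

lemma doubleLFunction_swap (K : ZMod N → ZMod N → ℂ) (s : ℂ) :
    doubleLFunction (Function.swap K) s = doubleLFunction K s := by
  rw [doubleLFunction, Finset.sum_comm]
  exact Finset.sum_congr rfl fun _ _ => Finset.sum_congr rfl fun _ _ => by
    rw [Function.swap, mul_comm (LFunction _ s)]

theorem doubleLFunction_one_sub (K : ZMod N → ZMod N → ℂ) {w : ℂ} (hw : ∀ n : ℕ, w ≠ -n)
    (hw1 : w ≠ 1) :
    doubleLFunction K (1 - w) = (N ^ (w - 1) * (2 * π) ^ (-w) * Gamma w) ^ 2 *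
      doubleLFunction (fun a b => ∑ u, ∑ v, K u v *
        (cexp (π * I * w / 2) * stdAddChar (-(u * a)) +
          cexp (-π * I * w / 2) * stdAddChar (u * a)) *
        (cexp (π * I * w / 2) * stdAddChar (-(v * b)) +
          cexp (-π * I * w / 2) * stdAddChar (v * b))) w := by
  simp only [doubleLFunction, LFunction_single_one_sub _ hw hw1, Finset.mul_sum, Finset.sum_mul]
  simp_rw [← Fintype.sum_prod_type']
  exact Fintype.sum_equiv ⟨fun x => (x.2.2.2, x.2.2.1, x.1, x.2.1),
    fun y => (y.2.2.1, y.2.2.2, y.2.1, y.1), fun _ => rfl, fun _ => rfl⟩ _ _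
    fun _ => by simp only [Equiv.coe_fn_mk]; ring

noncomputable def eisensteinKernel (ψ : ZMod N →* ℂ) (x a b : ZMod N) : ℂ :=
  ψ a * stdAddChar (a * b * x)

lemma divisorSum_eisensteinKernel (ψ : ZMod N →* ℂ) (x : ZMod N) (m : ℕ) :
    divisorSum (eisensteinKernel ψ x) m =
      (∑ p ∈ m.divisorsAntidiagonal, ψ p.1) * stdAddChar ((m : ZMod N) * x) := by
  rw [divisorSum, Finset.sum_mul]
  refine Finset.sum_congr rfl fun p hp => ?_
  rw [eisensteinKernel, ← (Nat.mem_divisorsAntidiagonal.mp hp).1, Nat.cast_mul]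

lemma sum_stdAddChar_mul_mul {x z : ZMod N} (hxz : x * z = 1) (u y : ZMod N) :
    ∑ v, stdAddChar (u * v * x) * stdAddChar (v * y) = if u = -(y * z) then (N : ℂ) else 0 := by
  have hroot : u * x + y = 0 ↔ u = -(y * z) := by
    constructor
    · intro h
      linear_combination z * h - u * hxz
    · rintro rfl
      linear_combination (-y) * hxz
  simp_rw [← AddChar.map_add_eq_mul,
    show ∀ v, u * v * x + v * y = v * (u * x + y) by intro v; ring,
    AddChar.sum_mulShift _ (isPrimitive_stdAddChar N), hroot, ZMod.card, Nat.cast_ite, Nat.cast_zero]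

lemma sum_sum_eisensteinKernel_mul {ψ : ZMod N →* ℂ} (hψ : ψ (-1) = 1) {x z : ZMod N}
    (hxz : x * z = 1) (P M : ℂ) (a b : ZMod N) :
    ∑ u, ∑ v, eisensteinKernel ψ x u v *
        (P * stdAddChar (-(u * a)) + M * stdAddChar (u * a)) *
        (P * stdAddChar (-(v * b)) + M * stdAddChar (v * b)) =
      N * ψ z * ((P ^ 2 + M ^ 2) * eisensteinKernel ψ (-z) b a +
        2 * P * M * eisensteinKernel ψ z b a) := by
  have hv (u : ZMod N) : ∑ v, stdAddChar (u * v * x) *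
      (P * stdAddChar (-(v * b)) + M * stdAddChar (v * b)) =
      P * (if u = b * z then (N : ℂ) else 0) + M * (if u = -(b * z) then (N : ℂ) else 0) := by
    simp_rw [← mul_neg, mul_add, Finset.sum_add_distrib, mul_left_comm _ P, mul_left_comm _ M,
      ← Finset.mul_sum, sum_stdAddChar_mul_mul hxz, neg_mul, neg_neg, mul_neg]
  have hψneg : ψ (-(b * z)) = ψ b * ψ z := by
    rw [neg_eq_neg_one_mul, map_mul, hψ, one_mul, map_mul]
  calc _ = ∑ u, ψ u * (P * stdAddChar (-(u * a)) + M * stdAddChar (u * a)) *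
        ∑ v, stdAddChar (u * v * x) * (P * stdAddChar (-(v * b)) + M * stdAddChar (v * b)) := by
        simp only [eisensteinKernel, Finset.mul_sum]
        exact Finset.sum_congr rfl fun _ _ => Finset.sum_congr rfl fun _ _ => by ring
    _ = _ := by
      simp only [hv]
      simp only [mul_add, mul_ite, mul_zero, Finset.sum_add_distrib, Finset.sum_ite_eq',
        Finset.mem_univ, if_true, hψneg, map_mul, eisensteinKernel]
      ring_nf

theorem doubleLFunction_eisensteinKernel_one_sub {ψ : ZMod N →* ℂ} (hψ : ψ (-1) = 1)
    {x z : ZMod N} (hxz : x * z = 1) {w : ℂ} (hw : ∀ n : ℕ, w ≠ -n) (hw1 : w ≠ 1) :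
    doubleLFunction (eisensteinKernel ψ x) (1 - w) =
      (N ^ (w - 1) * (2 * π) ^ (-w) * Gamma w) ^ 2 * N * ψ z *
        (2 * cos (π * w) * doubleLFunction (eisensteinKernel ψ (-z)) w +
          2 * doubleLFunction (eisensteinKernel ψ z) w) := by
  set P := cexp (π * I * w / 2)
  set M := cexp (-π * I * w / 2)
  have hPM : P * M = 1 := by
    rw [← Complex.exp_add, show π * I * w / 2 + -π * I * w / 2 = 0 by ring, Complex.exp_zero]
  have hP2M2 : P ^ 2 + M ^ 2 = 2 * cos (π * w) := by
    rw [two_cos, ← Complex.exp_nat_mul, ← Complex.exp_nat_mul]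
    ring_nf
  have hkernel : (fun a b => ∑ u, ∑ v, eisensteinKernel ψ x u v *
      (P * stdAddChar (-(u * a)) + M * stdAddChar (u * a)) *
      (P * stdAddChar (-(v * b)) + M * stdAddChar (v * b))) =
      ((N : ℂ) * ψ z) • ((P ^ 2 + M ^ 2) • Function.swap (eisensteinKernel ψ (-z)) +
        (2 * P * M) • Function.swap (eisensteinKernel ψ z)) := by
    ext a b
    simp [sum_sum_eisensteinKernel_mul hψ hxz, Function.swap]
  rw [doubleLFunction_one_sub _ hw hw1, hkernel, doubleLFunction_smul, doubleLFunction_add,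
    doubleLFunction_smul, doubleLFunction_smul, doubleLFunction_swap (eisensteinKernel ψ z),
    doubleLFunction_swap (eisensteinKernel ψ (-z)),
    hP2M2, mul_assoc 2 P, hPM]
  ring

end ZMod

lemma MulChar.star_apply_of_mul_eq_one {R : Type*} [CommRing R] [Finite Rˣ] (χ : MulChar R ℂ)
    {a b : R} (hab : a * b = 1) : star (χ a) = χ b := by
  rw [star_apply', inv_apply_eq_inv']
  exact inv_eq_of_mul_eq_one_right (by rw [← map_mul, hab, map_one])

lemma eq_of_differentiableAt_of_eq_of_one_lt_re {f g : ℂ → ℂ}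
    (hf : ∀ s ≠ 1, DifferentiableAt ℂ f s) (hg : ∀ s ≠ 1, DifferentiableAt ℂ g s)
    (hfg : ∀ s, 1 < s.re → f s = g s) {s : ℂ} (hs : s ≠ 1) : f s = g s := by
  have hU : IsPreconnected ({1}ᶜ : Set ℂ) :=
    (isConnected_compl_singleton_of_one_lt_rank (by simp) _).isPreconnected
  have hf' : AnalyticOnNhd ℂ f {1}ᶜ := DifferentiableOn.analyticOnNhd
    (fun t ht => (hf t ht).differentiableWithinAt) isOpen_compl_singleton
  have hg' : AnalyticOnNhd ℂ g {1}ᶜ := DifferentiableOn.analyticOnNhd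
    (fun t ht => (hg t ht).differentiableWithinAt) isOpen_compl_singleton
  have hfg' : f =ᶠ[nhds 2] g := by
    have h2 : (1 : ℝ) < (2 : ℂ).re := by norm_num
    filter_upwards [(isOpen_lt continuous_const continuous_re).mem_nhds h2] with t ht
      using hfg t ht
  exact hf'.eqOn_of_preconnected_of_eventuallyEq hg' hU (by norm_num) hfg' hs

lemma cpow_neg_sq_mul_self {x : ℂ} (hx : x ≠ 0) (s : ℂ) :
    (x ^ (-s)) ^ 2 * x = (x ^ (2 * s - 1))⁻¹ := by
  rw [cpow_sub _ _ hx, cpow_one, show 2 * s = (2 : ℕ) * s by norm_num, cpow_nat_mul, cpow_neg,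
    inv_div, inv_pow]
  ring

lemma J0plus_two_mul (w : ℂ) :
    J0plus (2 * w) = ((2 * π) ^ (-w) * Gamma w) ^ 2 * cos (π * w) := by
  rw [J0plus, show -(2 * w) = (2 : ℕ) * -w by push_cast; ring, cpow_nat_mul,
    show 2 * w / 2 = w by ring, show π * (2 * w) / 2 = π * w by ring]
  ring

lemma J0minus_two_mul (w : ℂ) : J0minus (2 * w) = ((2 * π) ^ (-w) * Gamma w) ^ 2 := by
  rw [J0minus, show -(2 * w) = (2 : ℕ) * -w by push_cast; ring, cpow_nat_mul,
    show 2 * w / 2 = w by ring]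
  ring

namespace DirichletCharacter

variable {q c : ℕ} (χ : DirichletCharacter ℂ q)

/-- Unlike `changeLevel hqc χ`, this does not vanish at residues that are units mod `q` but not
mod `c`, matching `eisCoef`. -/
noncomputable def castMonoidHom (hqc : q ∣ c) : ZMod c →* ℂ :=
  χ.toMonoidHom.comp (castHom hqc (ZMod q)).toMonoidHom

lemma castMonoidHom_apply (hqc : q ∣ c) (a : ZMod c) :
    χ.castMonoidHom hqc a = χ (castHom hqc (ZMod q) a) :=
  rfl

lemma castMonoidHom_neg_one (hqc : q ∣ c) (heven : χ (-1) = 1) :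
    χ.castMonoidHom hqc (-1) = 1 := by
  rwa [castMonoidHom_apply, map_neg, map_one]

lemma castMonoidHom_intCast_of_mul_eq_one (hqc : q ∣ c) {d d' : ℤ}
    (hdd' : (d : ZMod c) * d' = 1) :
    χ.castMonoidHom hqc d' = starRingEnd ℂ (χ d) := by
  have hdd'q : (d : ZMod q) * d' = 1 := by
    simpa only [map_mul, map_intCast, map_one] using congrArg (castHom hqc (ZMod q)) hdd'
  rw [← Complex.star_def, MulChar.star_apply_of_mul_eq_one χ hdd'q, castMonoidHom_apply,
    map_intCast]

variable [NeZero c]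

lemma voronoiL_summand_eq_term (hqc : q ∣ c) (y : ℤ) (s : ℂ) (m : ℕ) :
    eisCoef χ m * cexp (2 * π * I * (m * y / c)) * (m : ℂ) ^ (-s) =
      term (divisorSum (eisensteinKernel (χ.castMonoidHom hqc) y)) s m := by
  rcases eq_or_ne m 0 with rfl | hm
  · simp [eisCoef]
  have hcoef : ∑ p ∈ m.divisorsAntidiagonal, χ.castMonoidHom hqc p.1 = eisCoef χ m := by
    simp only [castMonoidHom_apply, map_natCast, eisCoef]
  have hchar : stdAddChar ((m : ZMod c) * (y : ZMod c)) = cexp (2 * π * I * (m * y / c)) := by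
    rw [← Int.cast_natCast, ← Int.cast_mul, stdAddChar_coe]
    push_cast
    ring_nf
  rw [term_of_ne_zero hm, divisorSum_eisensteinKernel, hcoef, hchar, cpow_neg]
  exact (div_eq_mul_inv _ _).symm

lemma summable_norm_voronoiL_summand (hqc : q ∣ c) (y : ℤ) {s : ℂ} (hs : 1 < s.re) :
    Summable fun m : ℕ => ‖eisCoef χ m * cexp (2 * π * I * (m * y / c)) * (m : ℂ) ^ (-s)‖ := by
  simpa only [voronoiL_summand_eq_term χ hqc] using
    (LSeriesHasSum_divisorSum (eisensteinKernel (χ.castMonoidHom hqc) y) hs).summable.norm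

lemma voronoiL_eq_doubleLFunction (hqc : q ∣ c) (y : ℤ) {s : ℂ} (hs : 1 < s.re) :
    voronoiL χ c y s = doubleLFunction (eisensteinKernel (χ.castMonoidHom hqc) y) s := by
  rw [voronoiL, ← (LSeriesHasSum_divisorSum _ hs).tsum_eq]
  exact tsum_congr (voronoiL_summand_eq_term χ hqc y s)

end DirichletCharacter

open DirichletCharacter

theorem stmt_15_general (q : ℕ) [NeZero q] (χ : DirichletCharacter ℂ q)
    (heven : χ (-1) = 1)
    (c : ℕ) (hc : 0 < c) (hqc : q ∣ c) (d d' : ℤ)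
    (hdd' : d * d' ≡ 1 [ZMOD (c : ℤ)])
    (f : ℂ → ℂ)
    (hf1 : ∀ s : ℂ, 1 < s.re → f s = voronoiL χ c d s)
    (hf2 : ∀ s : ℂ, s ≠ 1 → DifferentiableAt ℂ f s) :
    ∀ s : ℂ, s.re < 0 →
      (Summable fun m : ℕ =>
        ‖eisCoef χ m * Complex.exp (2 * π * I * ((m : ℂ) * ((-d' : ℤ) : ℂ) / (c : ℂ))) *
          (m : ℂ) ^ (-(1 - s))‖) ∧
      (Summable fun m : ℕ =>
        ‖eisCoef χ m * Complex.exp (2 * π * I * ((m : ℂ) * ((d' : ℤ) : ℂ) / (c : ℂ))) *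
          (m : ℂ) ^ (-(1 - s))‖) ∧
      f s = (2 * (starRingEnd ℂ) (χ (d : ZMod q)) / (c : ℂ) ^ (2 * s - 1)) *
        (J0plus (2 * (1 - s)) * voronoiL χ c (-d') (1 - s) +
          J0minus (2 * (1 - s)) * voronoiL χ c d' (1 - s)) := by
  intro s hs
  have : NeZero c := ⟨hc.ne'⟩
  have hw : 1 < (1 - s).re := by simp only [sub_re, one_re]; linarith
  have hw_ne_neg (n : ℕ) : 1 - s ≠ -n := fun h => by
    have := congrArg re h
    simp only [sub_re, one_re, neg_re, natCast_re] at this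
    linarith [n.cast_nonneg (α := ℝ)]
  have hw_ne_one : 1 - s ≠ 1 := fun h => by simp_all
  have hinv : (d : ZMod c) * d' = 1 := by
    exact_mod_cast (ZMod.intCast_eq_intCast_iff _ _ _).mpr hdd'
  refine ⟨summable_norm_voronoiL_summand χ hqc _ hw,
    summable_norm_voronoiL_summand χ hqc _ hw, ?_⟩
  have hfs : f s = doubleLFunction (eisensteinKernel (χ.castMonoidHom hqc) d) s :=
    eq_of_differentiableAt_of_eq_of_one_lt_re hf2 (fun _ => differentiableAt_doubleLFunction _)
      (fun t ht => (hf1 t ht).trans (voronoiL_eq_doubleLFunction χ hqc d ht))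
      (by rintro rfl; norm_num at hs)
  have hFE := doubleLFunction_eisensteinKernel_one_sub (χ.castMonoidHom_neg_one hqc heven) hinv
    hw_ne_neg hw_ne_one
  rw [sub_sub_cancel, sub_sub_cancel_left] at hFE
  rw [hfs, hFE, voronoiL_eq_doubleLFunction χ hqc _ hw, voronoiL_eq_doubleLFunction χ hqc _ hw,
    castMonoidHom_intCast_of_mul_eq_one χ hqc hinv, Int.cast_neg, div_eq_mul_inv,
    J0plus_two_mul, J0minus_two_mul, ← cpow_neg_sq_mul_self (Nat.cast_ne_zero.mpr hc.ne') s]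
  ring

/-- Functional equation for the Voronoĭ `L`-series of `E_{χ,1}` at `d/c`
with `q ∣ c`: for `Re s < 0`, the continuation `f` satisfies
`f s = (2 χ̄(d)/c^{2s−1}) [Ĵ₀^+(2(1−s)) L(1−s,E_{χ,1},−d̄/c) + Ĵ₀^−(2(1−s)) L(1−s,E_{χ,1},d̄/c)]`,
the two series on the right converging absolutely. -/
theorem stmt_15 (q : ℕ) [NeZero q] (hq : 1 < q) (χ : DirichletCharacter ℂ q)
    (hprim : χ.IsPrimitive) (heven : χ (-1) = 1)
    (c : ℕ) (hc : 0 < c) (hqc : q ∣ c) (d d' : ℤ) (hd : IsCoprime d (c : ℤ))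
    (hdd' : d * d' ≡ 1 [ZMOD (c : ℤ)])
    (f : ℂ → ℂ)
    (hf1 : ∀ s : ℂ, 1 < s.re → f s = voronoiL χ c d s)
    (hf2 : ∀ s : ℂ, s ≠ 1 → DifferentiableAt ℂ f s) :
    ∀ s : ℂ, s.re < 0 →
      (Summable fun m : ℕ =>
        ‖eisCoef χ m * Complex.exp (2 * π * I * ((m : ℂ) * ((-d' : ℤ) : ℂ) / (c : ℂ))) *
          (m : ℂ) ^ (-(1 - s))‖) ∧
      (Summable fun m : ℕ =>
        ‖eisCoef χ m * Complex.exp (2 * π * I * ((m : ℂ) * ((d' : ℤ) : ℂ) / (c : ℂ))) *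
          (m : ℂ) ^ (-(1 - s))‖) ∧
      f s = (2 * (starRingEnd ℂ) (χ (d : ZMod q)) / (c : ℂ) ^ (2 * s - 1)) *
        (J0plus (2 * (1 - s)) * voronoiL χ c (-d') (1 - s) +
          J0minus (2 * (1 - s)) * voronoiL χ c d' (1 - s)) :=
  stmt_15_general q χ heven c hc hqc d d' hdd' f hf1 hf2
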